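/- For fixed k ≥ 1, the generating function for punctual plane partitions with at most k rows (and arbitrarily many columns, no bound on entries) equals (1 + q + ⋯ + q^{k−1}) times the generating function for plane partitions with at most k rows: ∑_m p̃_{k}(m) q^m = (1 + q + ⋯ + q^{k−1}) · ∑_m p_{k}(m) q^m, as formal power series in q. -/

import Mathlib

open scoped BigOperators

/-- `p_k(m)`: the number of plane partitions of `m` with at most `k` rows (arbitrarily
many columns, no bound on entries): weakly decreasing arrays on `Fin k × ℕ` with
finite support and sum `m`. -/
noncomputable def rowPP (k m : ℕ) : ℕ :=
  Nat.card {f : Fin k × ℕ → ℕ //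
    (∀ p q : Fin k × ℕ, p.1 ≤ q.1 → p.2 ≤ q.2 → f q ≤ f p) ∧
    (Function.support f).Finite ∧ ∑ᶠ p, f p = m}

/-- `p̃_k(m)`: the number of punctual plane partitions of `m` with at most `k` rows:
the same, but indexed by positions other than the corner `(1,1)`. -/
noncomputable def rowPPpunc (k m : ℕ) : ℕ :=
  Nat.card {f : {p : Fin k × ℕ // ¬((p.1 : ℕ) = 0 ∧ p.2 = 0)} → ℕ //
    (∀ p q : {p : Fin k × ℕ // ¬((p.1 : ℕ) = 0 ∧ p.2 = 0)},
      p.1.1 ≤ q.1.1 → p.1.2 ≤ q.1.2 → f q ≤ f p) ∧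
    (Function.support f).Finite ∧ ∑ᶠ p, f p = m}


/-!
Slide the hole of a punctual plane partition outwards, jeu-de-taquin style: while the hole has a
nonzero neighbour, it swaps with its right neighbour, or with its lower neighbour when that one
is strictly larger, and an entry moving up into the hole loses `1`. The slide stops at the end
of some row `i < k` and leaves a plane partition of `m - i`. Every step can be undone, because
the values around the hole tell which way it came from, so this is a bijection between punctual
plane partitions of `m` and pairs `(i, π)` with `i < k` and `π` a plane partition of `m - i`;
that is the coefficient identity.
-/

open Function

def AntitoneOff {α β : Type*} [Preorder α] [Preorder β] (f : α → β) (p : α) : Prop :=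
  ∀ ⦃a b⦄, a ≤ b → ¬(a ≤ p ∧ p ≤ b) → f b ≤ f a

/-- Moving the hole from `p` to `q`: besides the pairs through `p`, only pairs that `p` separated
and `q` does not get constrained, and those follow through `v` by transitivity. -/
theorem AntitoneOff.update {α β : Type*} [PartialOrder α] [DecidableEq α] [Preorder β]
    {f : α → β} {p q : α} (hf : AntitoneOff f p) (hpq : p < q ∨ q < p) {v w : β}
    (hle : ∀ a, a < p → ¬(a ≤ q ∧ q ≤ p) → v ≤ f a)
    (hge : ∀ b, p < b → ¬(p ≤ q ∧ q ≤ b) → f b ≤ v) :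
    AntitoneOff (update (update f p v) q w) q := by
  intro a b hab hsep
  have haq : a ≠ q := by rintro rfl; exact hsep ⟨le_rfl, hab⟩
  have hbq : b ≠ q := by rintro rfl; exact hsep ⟨hab, le_rfl⟩
  simp only [update_apply, haq, hbq, if_false]
  by_cases hap : a = p <;> by_cases hbp : b = p
  · simp [hap, hbp]
  · subst hap
    simpa [hbp] using hge b (lt_of_le_of_ne hab (Ne.symm hbp)) hsep
  · subst hbp
    simpa [hap] using hle a (lt_of_le_of_ne hab hap) hsep
  · simp only [hap, hbp, if_false]
    by_cases hsep' : a ≤ p ∧ p ≤ b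
    · have hap' : a < p := lt_of_le_of_ne hsep'.1 hap
      have hpb : p < b := lt_of_le_of_ne hsep'.2 (Ne.symm hbp)
      rcases hpq with hpq | hqp
      · have hqb : ¬q ≤ b := fun hqb => hsep ⟨(hap'.trans hpq).le, hqb⟩
        exact (hge b hpb fun h => hqb h.2).trans
          (hle a hap' fun h => lt_irrefl _ (hpq.trans_le h.2))
      · have haq' : ¬a ≤ q := fun haq' => hsep ⟨haq', (hqp.trans hpb).le⟩
        exact (hge b hpb fun h => lt_irrefl _ (hqp.trans_le h.1)).trans
          (hle a hap' fun h => haq' h.1)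
    · exact hf hab hsep'

theorem AntitoneOff.apply_le_apply {β : Type*} [Preorder β] {f : ℕ × ℕ → β} {r c : ℕ}
    (hf : AntitoneOff f (r, c)) (a₁ a₂ b₁ b₂ : ℕ)
    (h : a₁ ≤ b₁ ∧ a₂ ≤ b₂ ∧ ¬(a₁ ≤ r ∧ a₂ ≤ c ∧ r ≤ b₁ ∧ c ≤ b₂)) : f (b₁, b₂) ≤ f (a₁, a₂) :=
  hf (Prod.mk_le_mk.2 ⟨h.1, h.2.1⟩) fun h' => h.2.2 ⟨h'.1.1, h'.1.2, h'.2.1, h'.2.2⟩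

section Finsum

variable {α ι M : Type*}

theorem Set.Finite.support_update [DecidableEq α] [Zero M] {f : α → M}
    (hf : (support f).Finite) (p : α) (v : M) : (support (update f p v)).Finite := by
  refine (hf.insert p).subset fun a ha => ?_
  by_cases hap : a = p
  · exact Or.inl hap
  · exact Or.inr (by simpa [update_apply, hap] using ha)

theorem finsum_update_add [DecidableEq α] [AddCommMonoid M] {f : α → M}
    (hf : (support f).Finite) (p : α) (v : M) :
    ∑ᶠ a, update f p v a + f p = ∑ᶠ a, f a + v := by
  have hp : p ∈ insert p hf.toFinset := Finset.mem_insert_self p _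
  rw [finsum_eq_sum_of_support_subset f (s := insert p hf.toFinset) (by intro a ha; simp_all),
    finsum_eq_sum_of_support_subset _ (s := insert p hf.toFinset) ?_,
    Finset.sum_update_of_mem hp, ← Finset.add_sum_erase _ _ hp, Finset.sdiff_singleton_eq_erase]
  · abel
  · intro a ha
    by_cases hap : a = p
    · simp [hap]
    · simpa [update_apply, hap] using ha

theorem Finset.sum_le_finsum [AddCommMonoid M] [PartialOrder M] [CanonicallyOrderedAdd M]
    {f : α → M} (hf : (support f).Finite) (t : Finset α) : ∑ a ∈ t, f a ≤ ∑ᶠ a, f a := by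
  classical
  rw [finsum_eq_sum_of_support_subset f (s := t ∪ hf.toFinset) (by intro a ha; simp_all)]
  exact Finset.sum_le_sum_of_subset Finset.subset_union_left

theorem finsum_comp_of_injective [AddCommMonoid M] {e : ι → α} (he : Injective e) {g : α → M}
    (hg : ∀ b ∉ Set.range e, g b = 0) : ∑ᶠ i, g (e i) = ∑ᶠ b, g b := by
  have hsupp : support g ⊆ Set.range e := fun b hb => by_contra fun h => hb (hg b h)
  rw [← finsum_mem_range he, ← finsum_mem_support g, ← Set.inter_eq_right.2 hsupp,
    finsum_mem_inter_support]

theorem finite_support_comp_iff [Zero M] {e : ι → α} (he : Injective e) {g : α → M}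
    (hg : ∀ b ∉ Set.range e, g b = 0) : (support (g ∘ e)).Finite ↔ (support g).Finite := by
  refine ⟨fun h => (h.image e).subset fun b hb => ?_, fun h => h.preimage he.injOn⟩
  obtain ⟨i, rfl⟩ : b ∈ Set.range e := by_contra fun h => hb (hg b h)
  exact ⟨i, hb, rfl⟩

theorem Nat.card_subtype_comp_of_injective [Zero M] {e : ι → α} (he : Injective e)
    (P : (ι → M) → Prop) :
    Nat.card {f : ι → M // P f} =
      Nat.card {g : α → M // (∀ b ∉ Set.range e, g b = 0) ∧ P (g ∘ e)} :=
  Nat.card_congr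
    { toFun f := ⟨extend e f.1 0, fun b hb => extend_apply' _ _ _ hb,
        by rw [extend_comp he]; exact f.2⟩
      invFun g := ⟨g.1 ∘ e, g.2.2⟩
      left_inv f := Subtype.ext (extend_comp he _ _)
      right_inv g := Subtype.ext <| funext fun b => by
        by_cases hb : b ∈ Set.range e
        · obtain ⟨i, rfl⟩ := hb
          exact he.extend_apply _ _ _
        · exact (extend_apply' _ _ _ hb).trans (g.2.1 b hb).symm }

end Finsum

theorem le_finsum_of_one_le {f : ℕ × ℕ → ℕ} (hf : (support f).Finite) (i c : ℕ)
    (h : ∀ j < c, 1 ≤ f (i, j)) : c ≤ ∑ᶠ a, f a :=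
  calc c = ∑ j ∈ Finset.range c, 1 := by simp
    _ ≤ ∑ j ∈ Finset.range c, f (i, j) :=
      Finset.sum_le_sum fun j hj => h j (Finset.mem_range.1 hj)
    _ = ∑ a ∈ (Finset.range c).map ⟨(i, ·), Prod.mk_right_injective i⟩, f a := by simp
    _ ≤ ∑ᶠ a, f a := Finset.sum_le_finsum hf _

structure IsPlanePartition (k : ℕ) (g : ℕ × ℕ → ℕ) : Prop where
  antitone : Antitone g
  eq_zero : ∀ a : ℕ × ℕ, k ≤ a.1 → g a = 0
  finite_support : (support g).Finite

theorem IsPlanePartition.eq_zero_of_le_col {k n : ℕ} {g : ℕ × ℕ → ℕ}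
    (hg : IsPlanePartition k g) (hn : ∑ᶠ a, g a = n) {a : ℕ × ℕ} (ha : n ≤ a.2) : g a = 0 := by
  by_contra h
  have := le_finsum_of_one_le hg.finite_support a.1 (a.2 + 1) fun j hj =>
    (Nat.one_le_iff_ne_zero.2 h).trans (hg.antitone (Prod.mk_le_mk.2 ⟨le_rfl, by omega⟩))
  omega

theorem finite_isPlanePartition (k n : ℕ) :
    Finite {g : ℕ × ℕ → ℕ // IsPlanePartition k g ∧ ∑ᶠ a, g a = n} := by
  refine Finite.of_injective (fun g (a : Fin k × Fin n) =>
    (⟨g.1 (a.1, a.2), Nat.lt_succ_of_le ?_⟩ : Fin (n + 1))) fun g₁ g₂ h => ?_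
  · exact (single_le_finsum _ g.2.1.finite_support fun _ => Nat.zero_le _).trans g.2.2.le
  · ext ⟨a₁, a₂⟩
    by_cases h₁ : a₁ < k
    · by_cases h₂ : a₂ < n
      · simpa using congrArg Fin.val (congrFun h (⟨a₁, h₁⟩, ⟨a₂, h₂⟩))
      · rw [g₁.2.1.eq_zero_of_le_col g₁.2.2 (by simp only; omega),
          g₂.2.1.eq_zero_of_le_col g₂.2.2 (by simp only; omega)]
    · rw [g₁.2.1.eq_zero _ (by simp only; omega), g₂.2.1.eq_zero _ (by simp only; omega)]

namespace Slide

/-- An array with a hole at `(row, col)`; the hole is stored as the entry `0`. -/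
@[ext] structure State where
  arr : ℕ × ℕ → ℕ
  row : ℕ
  col : ℕ

namespace State

variable (s : State)

def hole : ℕ × ℕ := (s.row, s.col)

def right : ℕ := s.arr (s.row, s.col + 1)

def down : ℕ := s.arr (s.row + 1, s.col)

def left : ℕ := s.arr (s.row, s.col - 1)

def up : ℕ := s.arr (s.row - 1, s.col)

def moveHole (r c v : ℕ) : State :=
  ⟨update (update s.arr s.hole v) (r, c) 0, r, c⟩

def IsTerminal : Prop := s.right = 0 ∧ s.down = 0

instance : DecidablePred IsTerminal := fun _ => inferInstanceAs (Decidable (_ ∧ _))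

end State

open State

/-- The invariant shared by both slides. `left` and `up` are junk values when `col = 0` or
`row = 0` (truncated subtraction), hence the guards. -/
structure Admissible (s : State) : Prop where
  antitoneOff : AntitoneOff s.arr s.hole
  arr_hole : s.arr s.hole = 0
  right_le_left : 0 < s.col → s.right ≤ s.left
  right_le_up : 0 < s.row → s.right ≤ s.up
  down_le_left : 0 < s.col → s.down ≤ s.left
  down_le_up_add_one : 0 < s.row → s.down ≤ s.up + 1
  one_le_left : 0 < s.col → 1 ≤ s.left

variable {s : State}

theorem Admissible.le_arr_of_lt_hole (hs : Admissible s) ⦃a : ℕ × ℕ⦄ (ha : a < s.hole) :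
    (a.1 < s.row ∧ s.up ≤ s.arr a) ∨ (a.1 = s.row ∧ a.2 < s.col ∧ s.left ≤ s.arr a) := by
  obtain ⟨f, r, c⟩ := s
  obtain ⟨a₁, a₂⟩ := a
  have hanti := hs.antitoneOff
  simp only [State.hole, Prod.lt_iff] at ha hanti
  dsimp only [State.up, State.left]
  rcases Nat.lt_or_ge a₁ r with h₁ | h₁
  · exact Or.inl ⟨h₁, hanti.apply_le_apply a₁ a₂ (r - 1) c (by omega)⟩
  · exact Or.inr ⟨by omega, by omega, hanti.apply_le_apply a₁ a₂ r (c - 1) (by omega)⟩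

theorem Admissible.arr_le_of_hole_lt (hs : Admissible s) ⦃b : ℕ × ℕ⦄ (hb : s.hole < b) :
    (b.1 = s.row ∧ s.col < b.2 ∧ s.arr b ≤ s.right) ∨ (s.row < b.1 ∧ s.arr b ≤ s.down) := by
  obtain ⟨f, r, c⟩ := s
  obtain ⟨b₁, b₂⟩ := b
  have hanti := hs.antitoneOff
  simp only [State.hole, Prod.lt_iff] at hb hanti
  dsimp only [State.right, State.down]
  rcases Nat.lt_or_ge r b₁ with h₁ | h₁
  · exact Or.inr ⟨h₁, hanti.apply_le_apply (r + 1) c b₁ b₂ (by omega)⟩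
  · exact Or.inl ⟨by omega, by omega, hanti.apply_le_apply r (c + 1) b₁ b₂ (by omega)⟩

theorem Admissible.forwardDown (hs : Admissible s) (h : s.right < s.down) :
    Admissible (s.moveHole (s.row + 1) s.col (s.down - 1)) := by
  have hle := hs.le_arr_of_lt_hole
  have hge := hs.arr_le_of_hole_lt
  obtain ⟨f, r, c⟩ := s
  obtain ⟨hanti, -, hRL, hRU, hDL, hDU, hL⟩ := hs
  simp only [State.right, State.down, State.left, State.up, State.hole] at *
  refine ⟨hanti.update (Or.inl (by simp)) (fun a ha _ => ?_) (fun b hb hsep => ?_),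
    ?_, ?_, ?_, ?_, ?_, ?_⟩
  · rcases hle ha with ⟨h₁, h'⟩ | ⟨-, h₂, h'⟩
    · have := hDU (by omega)
      omega
    · have := hDL (by omega)
      omega
  · rcases hge hb with ⟨-, -, h'⟩ | ⟨h₁, -⟩
    · omega
    · exact absurd ⟨Prod.mk_le_mk.2 ⟨by omega, le_rfl⟩, h₁, hb.le.2⟩ hsep
  all_goals simp only [State.moveHole, State.right, State.down, State.left, State.up,
    State.hole, update_apply, Prod.mk.injEq, Nat.add_sub_cancel]
  · simp
  · intro hc
    have := hanti.apply_le_apply (r + 1) (c - 1) (r + 1) (c + 1) (by omega)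
    split_ifs <;> omega
  · intro _
    have := hanti.apply_le_apply r (c + 1) (r + 1) (c + 1) (by omega)
    split_ifs <;> omega
  · intro hc
    have := hanti.apply_le_apply (r + 1) (c - 1) (r + 1 + 1) c (by omega)
    split_ifs <;> omega
  · intro _
    have := hanti.apply_le_apply (r + 1) c (r + 1 + 1) c (by omega)
    split_ifs <;> omega
  · intro hc
    have := hanti.apply_le_apply (r + 1) (c - 1) (r + 1) c (by omega)
    split_ifs <;> omega

theorem Admissible.forwardRight (hs : Admissible s) (h : s.down ≤ s.right) (h₁ : 1 ≤ s.right) :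
    Admissible (s.moveHole s.row (s.col + 1) s.right) := by
  have hle := hs.le_arr_of_lt_hole
  have hge := hs.arr_le_of_hole_lt
  obtain ⟨f, r, c⟩ := s
  obtain ⟨hanti, -, hRL, hRU, hDL, hDU, hL⟩ := hs
  simp only [State.right, State.down, State.left, State.up, State.hole] at *
  refine ⟨hanti.update (Or.inl (by simp)) (fun a ha _ => ?_) (fun b hb _ => ?_),
    ?_, ?_, ?_, ?_, ?_, ?_⟩
  · rcases hle ha with ⟨h₁, h'⟩ | ⟨-, h₂, h'⟩
    · have := hRU (by omega)
      omega
    · have := hRL (by omega)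
      omega
  · rcases hge hb with ⟨-, -, h'⟩ | ⟨-, h'⟩ <;> omega
  all_goals simp only [State.moveHole, State.right, State.down, State.left, State.up,
    State.hole, update_apply, Prod.mk.injEq, Nat.add_sub_cancel]
  · simp
  · intro _
    have := hanti.apply_le_apply r (c + 1) r (c + 1 + 1) (by omega)
    split_ifs <;> omega
  · intro _
    have := hanti.apply_le_apply (r - 1) (c + 1) r (c + 1 + 1) (by omega)
    split_ifs <;> omega
  · intro _
    have := hanti.apply_le_apply r (c + 1) (r + 1) (c + 1) (by omega)
    split_ifs <;> omega
  · intro _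
    have := hanti.apply_le_apply (r - 1) (c + 1) (r + 1) (c + 1) (by omega)
    split_ifs <;> omega
  · intro _
    split_ifs <;> omega

theorem Admissible.backwardUp (hs : Admissible s) (hr : 0 < s.row)
    (h : s.col = 0 ∨ s.up < s.left) :
    Admissible (s.moveHole (s.row - 1) s.col (s.up + 1)) := by
  have hle := hs.le_arr_of_lt_hole
  have hge := hs.arr_le_of_hole_lt
  obtain ⟨f, r, c⟩ := s
  obtain ⟨hanti, -, hRL, hRU, hDL, hDU, hL⟩ := hs
  simp only [State.right, State.down, State.left, State.up, State.hole] at *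
  obtain ⟨r, rfl⟩ : ∃ r', r = r' + 1 := ⟨r - 1, by omega⟩
  simp only [Nat.add_sub_cancel] at *
  refine ⟨hanti.update (Or.inr (by simp)) (fun a ha hsep => ?_) (fun b hb _ => ?_),
    ?_, ?_, ?_, ?_, ?_, ?_⟩
  · rcases hle ha with ⟨h₁, -⟩ | ⟨-, h₂, h'⟩
    · exact absurd ⟨Prod.mk_le_mk.2 ⟨by omega, ha.le.2⟩, Prod.mk_le_mk.2 ⟨by omega, le_rfl⟩⟩ hsep
    · omega
  · rcases hge hb with ⟨-, -, h'⟩ | ⟨-, h'⟩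
    · have := hRU (by omega)
      omega
    · have := hDU (by omega)
      omega
  all_goals simp only [State.moveHole, State.right, State.down, State.left, State.up,
    State.hole, update_apply, Prod.mk.injEq]
  · simp
  · intro _
    have := hanti.apply_le_apply r (c - 1) r (c + 1) (by omega)
    split_ifs <;> omega
  · intro _
    have := hanti.apply_le_apply (r - 1) c r (c + 1) (by omega)
    split_ifs <;> omega
  · intro hc
    have := hanti.apply_le_apply r (c - 1) (r + 1) (c - 1) (by omega)
    split_ifs <;> omega
  · intro _
    have := hanti.apply_le_apply (r - 1) c r c (by omega)
    split_ifs <;> omega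
  · intro hc
    have := hanti.apply_le_apply r (c - 1) (r + 1) (c - 1) (by omega)
    have := hL hc
    split_ifs <;> omega

theorem Admissible.backwardLeft (hs : Admissible s) (hc : 0 < s.col)
    (h : s.row = 0 ∨ s.left ≤ s.up) :
    Admissible (s.moveHole s.row (s.col - 1) s.left) := by
  have hle := hs.le_arr_of_lt_hole
  have hge := hs.arr_le_of_hole_lt
  obtain ⟨f, r, c⟩ := s
  obtain ⟨hanti, -, hRL, hRU, hDL, hDU, hL⟩ := hs
  simp only [State.right, State.down, State.left, State.up, State.hole] at *
  obtain ⟨c, rfl⟩ : ∃ c', c = c' + 1 := ⟨c - 1, by omega⟩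
  simp only [Nat.add_sub_cancel] at *
  refine ⟨hanti.update (Or.inr (by simp)) (fun a ha _ => ?_) (fun b hb _ => ?_),
    ?_, ?_, ?_, ?_, ?_, ?_⟩
  · rcases hle ha with ⟨h₁, h'⟩ | ⟨-, -, h'⟩ <;> omega
  · rcases hge hb with ⟨-, -, h'⟩ | ⟨-, h'⟩
    · have := hRL (by omega)
      omega
    · have := hDL (by omega)
      omega
  all_goals simp only [State.moveHole, State.right, State.down, State.left, State.up,
    State.hole, update_apply, Prod.mk.injEq]
  · simp
  · intro _
    have := hanti.apply_le_apply r (c - 1) r c (by omega)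
    split_ifs <;> omega
  · intro _
    have := hanti.apply_le_apply (r - 1) c r c (by omega)
    split_ifs <;> omega
  · intro _
    have := hanti.apply_le_apply r (c - 1) (r + 1) c (by omega)
    split_ifs <;> omega
  · intro _
    have := hanti.apply_le_apply (r - 1) c (r + 1) c (by omega)
    split_ifs <;> omega
  · intro _
    have := hanti.apply_le_apply r (c - 1) r c (by omega)
    have := hL (by omega)
    split_ifs <;> omega

def forwardStep (s : State) : State :=
  if s.IsTerminal then s
  else if s.right < s.down then s.moveHole (s.row + 1) s.col (s.down - 1)
  else s.moveHole s.row (s.col + 1) s.right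

def backwardStep (s : State) : State :=
  if s.hole = 0 then s
  else if s.col = 0 ∨ (0 < s.row ∧ s.up < s.left) then s.moveHole (s.row - 1) s.col (s.up + 1)
  else s.moveHole s.row (s.col - 1) s.left

theorem forwardStep_of_isTerminal (ht : s.IsTerminal) : forwardStep s = s := if_pos ht

theorem row_pos_of_hole_ne_zero (h0 : s.hole ≠ 0)
    (h : s.col = 0 ∨ (0 < s.row ∧ s.up < s.left)) : 0 < s.row := by
  rcases h with hc | h
  · exact Nat.pos_of_ne_zero fun hr => h0 (by simp [State.hole, hr, hc])
  · exact h.1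

theorem admissible_forwardStep (hs : Admissible s) : Admissible (forwardStep s) := by
  unfold forwardStep
  split_ifs with ht hlt
  · exact hs
  · exact hs.forwardDown hlt
  · refine hs.forwardRight (not_lt.1 hlt) (Nat.one_le_iff_ne_zero.2 fun h0 => ht ⟨h0, ?_⟩)
    omega

theorem admissible_backwardStep (hs : Admissible s) : Admissible (backwardStep s) := by
  unfold backwardStep
  split_ifs with h0 hup
  · exact hs
  · exact hs.backwardUp (row_pos_of_hole_ne_zero h0 hup) (hup.imp_right And.right)
  · rw [not_or, not_and, not_lt] at hup
    exact hs.backwardLeft (Nat.pos_of_ne_zero hup.1) (by omega)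

theorem moveHole_moveHole (h0 : s.arr s.hole = 0) {r c v : ℕ} (hne : (r, c) ≠ s.hole) :
    (s.moveHole r c v).moveHole s.row s.col (s.arr (r, c)) = s := by
  obtain ⟨f, r₀, c₀⟩ := s
  ext a
  · simp only [State.moveHole, State.hole] at *
    by_cases ha : a = (r₀, c₀)
    · simp [ha, h0]
    · by_cases ha' : a = (r, c)
      · simp [ha', hne]
      · simp [ha, ha']
  all_goals rfl

theorem backwardStep_forwardDown (hs : Admissible s) (h : s.right < s.down) :
    backwardStep (s.moveHole (s.row + 1) s.col (s.down - 1)) = s := by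
  obtain ⟨f, r, c⟩ := s
  have hanti := hs.antitoneOff
  simp only [State.right, State.down, State.hole] at h hanti ⊢
  have := hanti.apply_le_apply (r + 1) (c - 1) (r + 1) c (by omega)
  rw [backwardStep, if_neg (by simp [State.moveHole, State.hole]), if_pos]
  · have hD : 1 ≤ f (r + 1, c) := by omega
    convert moveHole_moveHole hs.arr_hole (by simp : (r + 1, c) ≠ (r, c)) using 2 <;>
      simp [State.moveHole, State.up, State.hole, Nat.sub_add_cancel hD]
  · rcases Nat.eq_zero_or_pos c with hc | hc
    · exact Or.inl hc
    · refine Or.inr ⟨r.succ_pos, ?_⟩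
      simp only [State.moveHole, State.up, State.left, State.hole, update_apply,
        Prod.mk.injEq, Nat.add_sub_cancel]
      split_ifs <;> omega

theorem backwardStep_forwardRight (hs : Admissible s) (h : ¬s.right < s.down) :
    backwardStep (s.moveHole s.row (s.col + 1) s.right) = s := by
  obtain ⟨f, r, c⟩ := s
  have hanti := hs.antitoneOff
  simp only [State.right, State.down, State.hole] at h hanti ⊢
  have := hanti.apply_le_apply (r - 1) (c + 1) r (c + 1) (by omega)
  rw [backwardStep, if_neg (by simp [State.moveHole, State.hole]), if_neg]
  · convert moveHole_moveHole hs.arr_hole (by simp : (r, c + 1) ≠ (r, c)) using 2 <;>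
      simp [State.moveHole, State.left, State.hole]
  · rintro (hc | ⟨hr, hlt⟩)
    · exact Nat.succ_ne_zero c hc
    · simp only [State.moveHole, State.up, State.left, State.hole, update_apply, Prod.mk.injEq,
        Nat.add_sub_cancel] at hr hlt
      split_ifs at hlt <;> omega

theorem forwardStep_backwardUp (hs : Admissible s) (hr : 0 < s.row) :
    forwardStep (s.moveHole (s.row - 1) s.col (s.up + 1)) = s := by
  obtain ⟨f, r, c⟩ := s
  obtain ⟨r, rfl⟩ : ∃ r', r = r' + 1 := ⟨r - 1, by simp only at hr; omega⟩
  have hanti := hs.antitoneOff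
  simp only [State.up, State.hole, Nat.add_sub_cancel] at hanti ⊢
  have := hanti.apply_le_apply r c r (c + 1) (by omega)
  have hdown : (State.moveHole ⟨f, r + 1, c⟩ r c (f (r, c) + 1)).down = f (r, c) + 1 := by
    simp [State.moveHole, State.down, State.hole]
  rw [forwardStep, if_neg fun ht => by rw [State.IsTerminal, hdown] at ht; omega, if_pos]
  · convert moveHole_moveHole hs.arr_hole (by simp : (r, c) ≠ (r + 1, c)) using 2 <;>
      simp [State.moveHole, State.down, State.hole]
  · rw [hdown]
    simp only [State.moveHole, State.right, State.hole, update_apply, Prod.mk.injEq]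
    split_ifs <;> omega

theorem forwardStep_backwardLeft (hs : Admissible s) (hc : 0 < s.col) :
    forwardStep (s.moveHole s.row (s.col - 1) s.left) = s := by
  obtain ⟨f, r, c⟩ := s
  obtain ⟨c, rfl⟩ : ∃ c', c = c' + 1 := ⟨c - 1, by simp only at hc; omega⟩
  have hanti := hs.antitoneOff
  have hL := hs.one_le_left (Nat.succ_pos c)
  simp only [State.left, State.hole, Nat.add_sub_cancel] at hanti hL ⊢
  have := hanti.apply_le_apply r c (r + 1) c (by omega)
  have hright : (State.moveHole ⟨f, r, c + 1⟩ r c (f (r, c))).right = f (r, c) := by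
    simp [State.moveHole, State.right, State.hole]
  rw [forwardStep, if_neg fun ht => by rw [State.IsTerminal, hright] at ht; omega, if_neg]
  · convert moveHole_moveHole hs.arr_hole (by simp : (r, c) ≠ (r, c + 1)) using 2 <;>
      simp [State.moveHole, State.hole]
  · rw [hright]
    simp only [State.moveHole, State.down, State.hole, update_apply, Prod.mk.injEq]
    split_ifs <;> omega

theorem backwardStep_forwardStep (hs : Admissible s) (ht : ¬s.IsTerminal) :
    backwardStep (forwardStep s) = s := by
  unfold forwardStep
  rw [if_neg ht]
  split_ifs with hlt
  · exact backwardStep_forwardDown hs hlt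
  · exact backwardStep_forwardRight hs hlt

theorem forwardStep_backwardStep (hs : Admissible s) (h0 : s.hole ≠ 0) :
    forwardStep (backwardStep s) = s := by
  unfold backwardStep
  rw [if_neg h0]
  split_ifs with hup
  · exact forwardStep_backwardUp hs (row_pos_of_hole_ne_zero h0 hup)
  · exact forwardStep_backwardLeft hs (Nat.pos_of_ne_zero (not_or.1 hup).1)


structure Valid (k m : ℕ) (s : State) : Prop extends Admissible s where
  row_lt : s.row < k
  arr_eq_zero : ∀ a : ℕ × ℕ, k ≤ a.1 → s.arr a = 0
  finite_support : (support s.arr).Finite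
  /-- An entry moving up loses `1` while the hole moves down a row, so this sum is conserved. -/
  finsum_add_row : ∑ᶠ a, s.arr a + s.row = m

variable {k m : ℕ}

theorem Valid.moveHole (hs : Valid k m s) {r c v : ℕ} (ht : Admissible (s.moveHole r c v))
    (hne : (r, c) ≠ s.hole) (hr : r < k) (hv : v + r = s.arr (r, c) + s.row) :
    Valid k m (s.moveHole r c v) where
  toAdmissible := ht
  row_lt := hr
  arr_eq_zero a ha := by
    simp only [State.moveHole, State.hole, update_apply]
    split_ifs with h₁ h₂
    · rfl
    · subst h₂
      exact absurd ha (not_le.2 hs.row_lt)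
    · exact hs.arr_eq_zero a ha
  finite_support := (hs.finite_support.support_update _ _).support_update _ _
  finsum_add_row := by
    have h₁ := finsum_update_add hs.finite_support s.hole v
    have h₂ := finsum_update_add (hs.finite_support.support_update s.hole v) (r, c) 0
    rw [update_of_ne hne] at h₂
    rw [hs.arr_hole] at h₁
    have := hs.finsum_add_row
    simp only [State.moveHole]
    omega

theorem valid_forwardStep (hs : Valid k m s) : Valid k m (forwardStep s) := by
  have hfwd := admissible_forwardStep hs.toAdmissible
  unfold forwardStep at hfwd ⊢
  split_ifs at hfwd ⊢ with ht hlt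
  · exact hs
  · have hr : s.row + 1 < k := by
      by_contra hk
      have := hs.arr_eq_zero (s.row + 1, s.col) (by simp only; omega)
      simp only [State.down, State.right] at this hlt
      omega
    refine hs.moveHole hfwd (by simp [State.hole]) hr ?_
    simp only [State.down] at hlt ⊢
    omega
  · exact hs.moveHole hfwd (by simp [State.hole]) hs.row_lt rfl

theorem valid_backwardStep (hs : Valid k m s) : Valid k m (backwardStep s) := by
  have hbwd := admissible_backwardStep hs.toAdmissible
  unfold backwardStep at hbwd ⊢
  split_ifs at hbwd ⊢ with h0 hup
  · exact hs
  · have hr := row_pos_of_hole_ne_zero h0 hup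
    refine hs.moveHole hbwd (by simp [State.hole]; omega) (by have := hs.row_lt; omega) ?_
    simp only [State.up]
    omega
  · exact hs.moveHole hbwd (by simp [State.hole]; omega) hs.row_lt rfl

theorem Valid.row_add_col_le (hs : Valid k m s) : s.row + s.col ≤ m := by
  have := hs.finsum_add_row
  have := le_finsum_of_one_le hs.finite_support s.row s.col fun j hj =>
    (hs.one_le_left (by omega)).trans
      (hs.antitoneOff.apply_le_apply s.row j s.row (s.col - 1) (by omega))
  omega

theorem row_add_col_forwardStep (ht : ¬s.IsTerminal) :
    (forwardStep s).row + (forwardStep s).col = s.row + s.col + 1 := by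
  unfold forwardStep
  split_ifs <;> simp only [State.moveHole] <;> omega

theorem row_add_col_backwardStep (h0 : s.hole ≠ 0) :
    (backwardStep s).row + (backwardStep s).col + 1 = s.row + s.col := by
  unfold backwardStep
  split_ifs with h hup
  · exact absurd h h0
  · have := row_pos_of_hole_ne_zero h0 hup
    simp only [State.moveHole]
    omega
  · simp only [State.hole, ne_eq, Prod.mk_eq_zero, not_and] at h0
    simp only [State.moveHole]
    omega

theorem isTerminal_or_row_add_col_iterate_forwardStep (s : State) (n : ℕ) :
    (forwardStep^[n] s).IsTerminal ∨
      (forwardStep^[n] s).row + (forwardStep^[n] s).col = s.row + s.col + n := by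
  induction n with
  | zero => exact Or.inr rfl
  | succ n ih =>
    rw [iterate_succ_apply']
    by_cases ht : (forwardStep^[n] s).IsTerminal
    · exact Or.inl (by rwa [forwardStep_of_isTerminal ht])
    · exact Or.inr (by rw [row_add_col_forwardStep ht, ih.resolve_left ht]; omega)

theorem admissible_iterate_forwardStep (hs : Admissible s) (n : ℕ) :
    Admissible (forwardStep^[n] s) :=
  Iterate.rec Admissible hs (fun _ => admissible_forwardStep) n

theorem admissible_iterate_backwardStep (hs : Admissible s) (n : ℕ) :
    Admissible (backwardStep^[n] s) :=
  Iterate.rec Admissible hs (fun _ => admissible_backwardStep) n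

theorem valid_iterate_forwardStep (hs : Valid k m s) (n : ℕ) : Valid k m (forwardStep^[n] s) :=
  Iterate.rec (Valid k m) hs (fun _ => valid_forwardStep) n

theorem valid_iterate_backwardStep (hs : Valid k m s) (n : ℕ) : Valid k m (backwardStep^[n] s) :=
  Iterate.rec (Valid k m) hs (fun _ => valid_backwardStep) n

/-- Each step moves the hole one diagonal outwards, and `Valid.row_add_col_le` caps the
diagonal of a valid hole at `m`. -/
theorem isTerminal_iterate_forwardStep (hs : Valid k m s) :
    (forwardStep^[m + 1] s).IsTerminal := by
  have := (valid_iterate_forwardStep hs (m + 1)).row_add_col_le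
  refine (isTerminal_or_row_add_col_iterate_forwardStep s (m + 1)).resolve_right ?_
  omega

theorem exists_iterate_backwardStep_iterate_forwardStep (hs : Admissible s) (n : ℕ) :
    ∃ j, (forwardStep^[n] s).row + (forwardStep^[n] s).col = s.row + s.col + j ∧
      backwardStep^[j] (forwardStep^[n] s) = s := by
  induction n with
  | zero => exact ⟨0, rfl, rfl⟩
  | succ n ih =>
    obtain ⟨j, hj, hback⟩ := ih
    rw [iterate_succ_apply']
    by_cases ht : (forwardStep^[n] s).IsTerminal
    · exact ⟨j, by rwa [forwardStep_of_isTerminal ht], by rwa [forwardStep_of_isTerminal ht]⟩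
    · refine ⟨j + 1, by rw [row_add_col_forwardStep ht]; omega, ?_⟩
      rw [iterate_succ_apply, backwardStep_forwardStep (admissible_iterate_forwardStep hs n) ht,
        hback]

theorem iterate_forwardStep_iterate_backwardStep (hs : Admissible s) {n : ℕ}
    (hn : n ≤ s.row + s.col) :
    forwardStep^[n] (backwardStep^[n] s) = s ∧
      (backwardStep^[n] s).row + (backwardStep^[n] s).col + n = s.row + s.col := by
  induction n with
  | zero => exact ⟨rfl, rfl⟩
  | succ n ih =>
    obtain ⟨hfwd, hpos⟩ := ih (by omega)
    have h0 : (backwardStep^[n] s).hole ≠ 0 := by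
      simp only [State.hole, ne_eq, Prod.mk_eq_zero]
      omega
    rw [iterate_succ_apply' backwardStep, iterate_succ_apply forwardStep,
      forwardStep_backwardStep (admissible_iterate_backwardStep hs n) h0]
    exact ⟨hfwd, by have := row_add_col_backwardStep h0; omega⟩

def slideEquiv (k m : ℕ) :
    {s // Valid k m s ∧ s.hole = 0} ≃ {s // Valid k m s ∧ s.IsTerminal} where
  toFun s := ⟨forwardStep^[m + 1] s, valid_iterate_forwardStep s.2.1 _,
    isTerminal_iterate_forwardStep s.2.1⟩
  invFun t := ⟨backwardStep^[t.1.row + t.1.col] t, valid_iterate_backwardStep t.2.1 _, by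
    have := (iterate_forwardStep_iterate_backwardStep t.2.1.toAdmissible le_rfl).2
    simp only [State.hole, Prod.mk_eq_zero]
    omega⟩
  left_inv s := by
    obtain ⟨j, hj, hback⟩ :=
      exists_iterate_backwardStep_iterate_forwardStep s.2.1.toAdmissible (m + 1)
    have h0 := s.2.2
    simp only [State.hole, Prod.mk_eq_zero] at h0
    refine Subtype.ext ?_
    change backwardStep^[_] (forwardStep^[m + 1] s.1) = s.1
    rwa [hj, h0.1, h0.2, Nat.zero_add, Nat.zero_add]
  right_inv t := by
    obtain ⟨hfwd, -⟩ := iterate_forwardStep_iterate_backwardStep t.2.1.toAdmissible le_rfl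
    have := t.2.1.row_add_col_le
    refine Subtype.ext ?_
    simp only
    rw [show m + 1 = (m + 1 - (t.1.row + t.1.col)) + (t.1.row + t.1.col) by omega,
      iterate_add_apply, hfwd, iterate_fixed (forwardStep_of_isTerminal t.2.2)]

theorem Admissible.arr_eq_zero_of_hole_le (hs : Admissible s) (ht : s.IsTerminal) {b : ℕ × ℕ}
    (hb : s.hole ≤ b) : s.arr b = 0 := by
  obtain ⟨f, r, c⟩ := s
  obtain ⟨b₁, b₂⟩ := b
  obtain ⟨hR, hD⟩ := ht
  have hanti := hs.antitoneOff
  have h0 := hs.arr_hole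
  simp only [State.right, State.down, State.hole, Prod.mk_le_mk] at hR hD hb hanti h0 ⊢
  by_cases hbr : b₁ = r
  · by_cases hbc : b₂ = c
    · rwa [hbr, hbc]
    · have := hanti.apply_le_apply r (c + 1) b₁ b₂ (by omega)
      omega
  · have := hanti.apply_le_apply (r + 1) c b₁ b₂ (by omega)
    omega

theorem Admissible.antitone_of_isTerminal (hs : Admissible s) (ht : s.IsTerminal) :
    Antitone s.arr := fun a b hab => by
  by_cases hsep : a ≤ s.hole ∧ s.hole ≤ b
  · rw [hs.arr_eq_zero_of_hole_le ht hsep.2]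
    exact Nat.zero_le _
  · exact hs.antitoneOff hab hsep

noncomputable def rowLength (g : ℕ × ℕ → ℕ) (i : ℕ) : ℕ := sInf {j | g (i, j) = 0}

theorem Admissible.col_eq_rowLength (hs : Admissible s) : s.col = rowLength s.arr s.row := by
  refine le_antisymm (le_of_not_gt fun h => ?_) (Nat.sInf_le hs.arr_hole)
  have hmem : s.arr (s.row, rowLength s.arr s.row) = 0 :=
    Nat.sInf_mem (s := {j | s.arr (s.row, j) = 0}) ⟨s.col, hs.arr_hole⟩
  have := (hs.one_le_left (by omega)).trans
    (hs.antitoneOff.apply_le_apply s.row (rowLength s.arr s.row) s.row (s.col - 1) (by omega))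
  omega

theorem valid_of_isPlanePartition {k m : ℕ} {g : ℕ × ℕ → ℕ} (hg : IsPlanePartition k g) {i : ℕ}
    (hi : i < k) (hm : ∑ᶠ a, g a + i = m) :
    Valid k m ⟨g, i, rowLength g i⟩ ∧ State.IsTerminal ⟨g, i, rowLength g i⟩ := by
  have hne : {j | g (i, j) = 0}.Nonempty := by
    obtain ⟨j, hj⟩ := (hg.finite_support.preimage (Prod.mk_right_injective i).injOn).exists_notMem
    exact ⟨j, by simpa using hj⟩
  have h0 : g (i, rowLength g i) = 0 := Nat.sInf_mem hne
  have hR : g (i, rowLength g i + 1) = 0 :=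
    Nat.eq_zero_of_le_zero (h0 ▸ hg.antitone (Prod.mk_le_mk.2 ⟨le_rfl, by omega⟩))
  have hD : g (i + 1, rowLength g i) = 0 :=
    Nat.eq_zero_of_le_zero (h0 ▸ hg.antitone (Prod.mk_le_mk.2 ⟨by omega, le_rfl⟩))
  refine ⟨⟨⟨fun a b hab _ => hg.antitone hab, h0, ?_, ?_, ?_, ?_, ?_⟩, hi, hg.eq_zero,
    hg.finite_support, hm⟩, hR, hD⟩
  all_goals simp only [State.right, State.down, State.left, State.up, hR, hD, zero_le,
    implies_true]
  exact fun hc => Nat.one_le_iff_ne_zero.2 (Nat.notMem_of_lt_sInf (s := {j | g (i, j) = 0})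
    (Nat.sub_one_lt_of_lt hc))

noncomputable def terminalEquiv (k m : ℕ) :
    {s // Valid k m s ∧ s.IsTerminal} ≃
      Σ i : Fin k, {g : ℕ × ℕ → ℕ // IsPlanePartition k g ∧ ∑ᶠ a, g a + i = m} where
  toFun s := ⟨⟨s.1.row, s.2.1.row_lt⟩, s.1.arr,
    ⟨s.2.1.antitone_of_isTerminal s.2.2, s.2.1.arr_eq_zero, s.2.1.finite_support⟩,
    s.2.1.finsum_add_row⟩
  invFun x := ⟨⟨x.2.1, x.1, rowLength x.2.1 x.1⟩, valid_of_isPlanePartition x.2.2.1 x.1.2 x.2.2.2⟩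
  left_inv s := Subtype.ext (State.ext rfl rfl s.2.1.col_eq_rowLength.symm)
  right_inv _ := rfl

end Slide

open Slide

def finEmb (k : ℕ) (p : Fin k × ℕ) : ℕ × ℕ := (p.1, p.2)

theorem finEmb_injective (k : ℕ) : Injective (finEmb k) := fun p q h => by
  simp only [finEmb, Prod.mk.injEq] at h
  exact Prod.ext (Fin.ext h.1) h.2

theorem mem_range_finEmb {k : ℕ} {b : ℕ × ℕ} : b ∈ Set.range (finEmb k) ↔ b.1 < k :=
  ⟨by rintro ⟨p, rfl⟩; exact p.1.2, fun h => ⟨(⟨b.1, h⟩, b.2), rfl⟩⟩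

def puncEmb (k : ℕ) (p : {p : Fin k × ℕ // ¬((p.1 : ℕ) = 0 ∧ p.2 = 0)}) : ℕ × ℕ := finEmb k p.1

theorem puncEmb_injective (k : ℕ) : Injective (puncEmb k) :=
  fun _ _ h => Subtype.ext (finEmb_injective k h)

theorem mem_range_puncEmb {k : ℕ} {b : ℕ × ℕ} :
    b ∈ Set.range (puncEmb k) ↔ b.1 < k ∧ ¬(b.1 = 0 ∧ b.2 = 0) :=
  ⟨by rintro ⟨p, rfl⟩; exact ⟨p.1.1.2, p.2⟩, fun h => ⟨⟨(⟨b.1, h.1⟩, b.2), h.2⟩, rfl⟩⟩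

theorem rowPP_eq_card (k n : ℕ) :
    rowPP k n = Nat.card {g : ℕ × ℕ → ℕ // IsPlanePartition k g ∧ ∑ᶠ a, g a = n} := by
  have he := finEmb_injective k
  rw [rowPP, Nat.card_subtype_comp_of_injective he]
  refine Nat.card_congr (Equiv.subtypeEquivRight fun g => ⟨?_, ?_⟩)
  · rintro ⟨hzero, hmono, hfin, hsum⟩
    have hrows : ∀ a : ℕ × ℕ, k ≤ a.1 → g a = 0 :=
      fun a ha => hzero a (by rw [mem_range_finEmb]; omega)
    refine ⟨⟨fun a b hab => ?_, hrows, (finite_support_comp_iff he hzero).1 hfin⟩,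
      (finsum_comp_of_injective he hzero).symm.trans hsum⟩
    by_cases hb : b.1 < k
    · exact hmono (⟨a.1, hab.1.trans_lt hb⟩, a.2) (⟨b.1, hb⟩, b.2) hab.1 hab.2
    · exact (hrows b (not_lt.1 hb)).trans_le (Nat.zero_le _)
  · rintro ⟨hg, hsum⟩
    have hzero : ∀ b ∉ Set.range (finEmb k), g b = 0 :=
      fun b hb => hg.eq_zero b (not_lt.1 (mt mem_range_finEmb.2 hb))
    exact ⟨hzero, fun p q h₁ h₂ => hg.antitone (Prod.mk_le_mk.2 ⟨h₁, h₂⟩),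
      (finite_support_comp_iff he hzero).2 hg.finite_support,
      (finsum_comp_of_injective he hzero).trans hsum⟩

theorem rowPPpunc_eq_card {k : ℕ} (hk : 0 < k) (m : ℕ) :
    rowPPpunc k m = Nat.card {g : ℕ × ℕ → ℕ // Valid k m ⟨g, 0, 0⟩} := by
  have he := puncEmb_injective k
  rw [rowPPpunc, Nat.card_subtype_comp_of_injective he]
  refine Nat.card_congr (Equiv.subtypeEquivRight fun g => ⟨?_, ?_⟩)
  · rintro ⟨hzero, hmono, hfin, hsum⟩
    have hrows : ∀ a : ℕ × ℕ, k ≤ a.1 → g a = 0 :=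
      fun a ha => hzero a fun h => by have := (mem_range_puncEmb.1 h).1; omega
    refine ⟨⟨?_, hzero _ fun h => (mem_range_puncEmb.1 h).2 ⟨rfl, rfl⟩, ?_, ?_, ?_, ?_, ?_⟩,
      hk, hrows, (finite_support_comp_iff he hzero).1 hfin,
      (finsum_comp_of_injective he hzero).symm.trans hsum⟩
    · rintro ⟨a₁, a₂⟩ ⟨b₁, b₂⟩ hab hsep
      simp only [State.hole, Prod.mk_le_mk] at hab hsep
      by_cases hb : b₁ < k
      · exact hmono ⟨(⟨a₁, by omega⟩, a₂), by simp only; omega⟩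
          ⟨(⟨b₁, hb⟩, b₂), by simp only; omega⟩ hab.1 hab.2
      · exact (hrows (b₁, b₂) (not_lt.1 hb)).trans_le (Nat.zero_le _)
    all_goals exact fun h => absurd h (lt_irrefl 0)
  · intro hs
    have hzero : ∀ b ∉ Set.range (puncEmb k), g b = 0 := fun ⟨b₁, b₂⟩ hb => by
      rw [mem_range_puncEmb, not_and_or, not_lt, not_not] at hb
      rcases hb with hb | ⟨rfl, rfl⟩
      · exact hs.arr_eq_zero _ hb
      · exact hs.arr_hole
    refine ⟨hzero, fun p q h₁ h₂ => hs.antitoneOff (Prod.mk_le_mk.2 ⟨h₁, h₂⟩) ?_,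
      (finite_support_comp_iff he hzero).2 hs.finite_support,
      (finsum_comp_of_injective he hzero).trans hs.finsum_add_row⟩
    rintro ⟨hp, -⟩
    exact p.2 ⟨Nat.le_zero.1 hp.1, Nat.le_zero.1 hp.2⟩

def originEquiv (k m : ℕ) :
    {g : ℕ × ℕ → ℕ // Valid k m ⟨g, 0, 0⟩} ≃ {s // Valid k m s ∧ s.hole = 0} where
  toFun g := ⟨⟨g, 0, 0⟩, g.2, rfl⟩
  invFun s := ⟨s.1.arr, by
    obtain ⟨⟨g, r, c⟩, hs, h0⟩ := s
    obtain ⟨rfl, rfl⟩ := Prod.mk_eq_zero.1 h0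
    exact hs⟩
  left_inv _ := rfl
  right_inv s := by
    obtain ⟨⟨g, r, c⟩, hs, h0⟩ := s
    obtain ⟨rfl, rfl⟩ := Prod.mk_eq_zero.1 h0
    rfl

theorem card_isPlanePartition_add (k m i : ℕ) :
    Nat.card {g : ℕ × ℕ → ℕ // IsPlanePartition k g ∧ ∑ᶠ a, g a + i = m} =
      if i ≤ m then rowPP k (m - i) else 0 := by
  split_ifs with hi
  · rw [rowPP_eq_card]
    exact Nat.card_congr (Equiv.subtypeEquivRight fun g => and_congr_right fun _ => by omega)
  · have : IsEmpty {g : ℕ × ℕ → ℕ // IsPlanePartition k g ∧ ∑ᶠ a, g a + i = m} :=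
      ⟨fun g => by omega⟩
    exact Nat.card_of_isEmpty

theorem rowPPpunc_eq_sum {k : ℕ} (hk : 0 < k) (m : ℕ) :
    rowPPpunc k m = ∑ i ∈ Finset.range k, if i ≤ m then rowPP k (m - i) else 0 := by
  have (i : Fin k) : Finite {g // IsPlanePartition k g ∧ ∑ᶠ a, g a + i = m} :=
    have := finite_isPlanePartition k (m - i)
    Finite.of_injective (fun g => (⟨g.1, g.2.1, by omega⟩ :
      {g // IsPlanePartition k g ∧ ∑ᶠ a, g a = m - i})) fun _ _ h => Subtype.ext (Subtype.mk.inj h)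
  rw [rowPPpunc_eq_card hk, Nat.card_congr ((originEquiv k m).trans
    ((slideEquiv k m).trans (terminalEquiv k m))), Nat.card_sigma, ← Fin.sum_univ_eq_sum_range]
  exact Finset.sum_congr rfl fun i _ => card_isPlanePartition_add k m i

/-- For fixed `k ≥ 1`,
`∑_m p̃_k(m) q^m = (1 + q + ⋯ + q^{k-1}) · ∑_m p_k(m) q^m` as formal power series. -/
theorem stmt9 (k : ℕ) (hk : 1 ≤ k) :
    PowerSeries.mk (fun m => (rowPPpunc k m : ℚ)) =
      (∑ i ∈ Finset.range k, PowerSeries.X ^ i) *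
        PowerSeries.mk (fun m => (rowPP k m : ℚ)) := by
  ext m
  rw [PowerSeries.coeff_mk, Finset.sum_mul, map_sum, rowPPpunc_eq_sum hk, Nat.cast_sum]
  refine Finset.sum_congr rfl fun i _ => ?_
  rw [PowerSeries.coeff_X_pow_mul', PowerSeries.coeff_mk]
  split_ifs <;> simp
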